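/- Let (π_0, …, π_{c−1}) be a price cycle that equals the concatenation, for t = 0, …, d−1 in order, of k_t consecutive copies of ρ_t, where d ≥ 1, ρ_0, …, ρ_{d−1} ∈ P, each k_t ∈ {1, ℓ}, and k_t = 1 implies ρ_t ≤ ρ_{(t−1) mod d}. Then for every t ∈ {0, …, d−1}, the last position of the block of copies of ρ_t is a reset point of the cycle; moreover, if k_t = ℓ and ρ_t ≤ ρ_{(t−1) mod d}, then all ℓ positions of the block of copies of ρ_t are reset points. -/

import Mathlib

/-- Entry of a price cycle at (cyclic) position `t`. -/
noncomputable def cycEntry (L : List ℝ) (t : ℕ) : ℝ := L.getD (t % L.length) 0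

/-- Reference at position `t`: minimum of the `ℓ` cyclically preceding entries. -/
noncomputable def cycRef (ℓ : ℕ) (hℓ : 0 < ℓ) (L : List ℝ) (t : ℕ) : ℝ :=
  (Finset.range ℓ).inf' (Finset.nonempty_range_iff.mpr hℓ.ne') fun j =>
    cycEntry L (t + L.length * ℓ - (j + 1))

/-- Objective value of a price cycle. -/
noncomputable def cycObj (g : ℝ → ℝ → ℝ) (ℓ : ℕ) (hℓ : 0 < ℓ) (L : List ℝ) : ℝ :=
  (∑ t ∈ Finset.range L.length, g (cycRef ℓ hℓ L t) (cycEntry L t)) / L.length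

def RefMonotone (P : Finset ℝ) (g : ℝ → ℝ → ℝ) : Prop :=
  ∀ p ∈ P, ∀ r ∈ P, ∀ r' ∈ P, r ≤ r' → g r p ≤ g r' p

noncomputable def genK (ℓ : ℕ) (R : List ℝ) (t : ℕ) : ℕ :=
  if R.getD ((t + R.length - 1) % R.length) 0 < R.getD t 0 then ℓ else 1

noncomputable def inducedCycle (ℓ : ℕ) (R : List ℝ) : List ℝ :=
  (List.range R.length).flatMap fun t => List.replicate (genK ℓ R t) (R.getD t 0)

def IsResetPoint (ℓ : ℕ) (hℓ : 0 < ℓ) (L : List ℝ) (t : ℕ) : Prop :=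
  cycEntry L t = (Finset.range ℓ).inf' (Finset.nonempty_range_iff.mpr hℓ.ne') fun j =>
    cycEntry L (t + L.length * ℓ - j)

/-!
Inside a block all entries are equal, so only the part of the length-`ℓ` window reaching back
past the start of a block matters. Walking backwards from a block whose price does not exceed
its predecessor's, every block of length `1` met on the way again does not exceed its
predecessor's price, so prices can only rise going back, until a block of length `ℓ` is reached,
which covers the rest of the window.
-/

open Finset

section FlatMap

variable {α : Type*} (f : ℕ → List α)

theorem length_flatMap_range (d : ℕ) :
    ((List.range d).flatMap f).length = ∑ s ∈ range d, (f s).length := by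
  induction d with
  | zero => simp
  | succ d ih => simp [List.range_succ, sum_range_succ, ih]

theorem getD_flatMap_range (x : α) {d t i : ℕ} (ht : t < d) (hi : i < (f t).length) :
    ((List.range d).flatMap f).getD ((∑ s ∈ range t, (f s).length) + i) x = (f t).getD i x := by
  induction d with
  | zero => omega
  | succ d ih =>
    rw [List.range_succ, List.flatMap_append]
    rcases Nat.lt_succ_iff_lt_or_eq.mp ht with ht | rfl
    · have hlt : (∑ s ∈ range t, (f s).length) + i < ((List.range d).flatMap f).length := by
        have := sum_le_sum_of_subset (f := fun s => (f s).length) (range_subset_range.mpr ht)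
        rw [sum_range_succ] at this
        rw [length_flatMap_range]
        omega
      rw [List.getD_append _ _ _ _ hlt, ih ht]
    · rw [List.getD_append_right _ _ _ _ (by rw [length_flatMap_range]; omega),
        length_flatMap_range]
      simp

end FlatMap

/-- `cycEntry` at integer positions, so that cyclic predecessors need no truncated subtraction. -/
noncomputable def cycEntryInt (L : List ℝ) (z : ℤ) : ℝ := L.getD (z % L.length).toNat 0

theorem cycEntryInt_natCast (L : List ℝ) (m : ℕ) : cycEntryInt L m = cycEntry L m := by
  rw [cycEntryInt, cycEntry, ← Int.natCast_mod, Int.toNat_natCast]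

theorem cycEntryInt_congr (L : List ℝ) {z w : ℤ} (h : z ≡ w [ZMOD L.length]) :
    cycEntryInt L z = cycEntryInt L w := by
  rw [cycEntryInt, cycEntryInt, h.eq]

theorem cycEntry_add_length_mul_sub (L : List ℝ) (pos : ℕ) {ℓ j : ℕ} (hj : j < ℓ) :
    cycEntry L (pos + L.length * ℓ - j) = cycEntryInt L (pos - j) := by
  rcases Nat.eq_zero_or_pos L.length with hL | hL
  · simp [List.length_eq_zero_iff.mp hL, cycEntry, cycEntryInt]
  have hjle : j ≤ L.length * ℓ := hj.le.trans (Nat.le_mul_of_pos_left ℓ hL)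
  rw [← cycEntryInt_natCast]
  apply cycEntryInt_congr
  rw [Int.modEq_iff_dvd]
  exact ⟨-ℓ, by push_cast [Nat.cast_sub (by omega : j ≤ pos + L.length * ℓ)]; ring⟩

theorem isResetPoint_iff {ℓ : ℕ} (hℓ : 0 < ℓ) (L : List ℝ) (pos : ℕ) :
    IsResetPoint ℓ hℓ L pos ↔ ∀ j < ℓ, cycEntry L pos ≤ cycEntryInt L (pos - j) := by
  rw [IsResetPoint, inf'_congr _ rfl fun j hj => cycEntry_add_length_mul_sub L pos (mem_range.mp hj)]
  refine ⟨fun h j hj => h ▸ inf'_le _ (mem_range.mpr hj), fun h => ?_⟩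
  refine le_antisymm (le_inf' _ _ fun j hj => h j (mem_range.mp hj)) ?_
  calc _ ≤ cycEntryInt L (pos - (0 : ℕ)) := inf'_le _ (mem_range.mpr hℓ)
    _ = cycEntry L pos := by rw [Nat.cast_zero, sub_zero, cycEntryInt_natCast]

section Blocks

variable {ℓ d : ℕ} (ρ : ℕ → ℝ) (k : ℕ → ℕ)

def blockCycle (d : ℕ) (ρ : ℕ → ℝ) (k : ℕ → ℕ) : List ℝ :=
  (List.range d).flatMap fun s => List.replicate (k s) (ρ s)

def blockStart (k : ℕ → ℕ) (t : ℕ) : ℕ := ∑ s ∈ range t, k s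

theorem length_blockCycle : (blockCycle d ρ k).length = blockStart k d := by
  rw [blockCycle, length_flatMap_range]
  simp [blockStart]

theorem blockStart_zero : blockStart k 0 = 0 :=
  sum_range_zero k

theorem blockStart_succ (t : ℕ) : blockStart k (t + 1) = blockStart k t + k t :=
  sum_range_succ k t

theorem cycEntryInt_blockCycle {t i : ℕ} (ht : t < d) (hi : i < k t) :
    cycEntryInt (blockCycle d ρ k) (blockStart k t + i : ℕ) = ρ t := by
  have hlt : blockStart k t + i < blockStart k d :=
    calc _ < blockStart k (t + 1) := by rw [blockStart_succ]; omega
      _ ≤ blockStart k d := sum_le_sum_of_subset (range_subset_range.mpr ht)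
  rw [cycEntryInt_natCast, cycEntry, length_blockCycle, Nat.mod_eq_of_lt hlt]
  have := getD_flatMap_range (fun s => List.replicate (k s) (ρ s)) 0 ht (by simpa using hi)
  simp only [List.length_replicate] at this
  rw [blockCycle, blockStart, this, List.getD_replicate _ hi]

/-- The block before block `t` ends, cyclically, where block `t` starts. -/
theorem blockStart_prev_add_modEq {t : ℕ} (ht : t < d) :
    (blockStart k ((t + d - 1) % d) + k ((t + d - 1) % d) : ℤ) ≡ blockStart k t
      [ZMOD blockStart k d] := by
  rcases Nat.eq_zero_or_pos t with rfl | htpos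
  · rw [zero_add, Nat.mod_eq_of_lt (by omega : d - 1 < d), ← Nat.cast_add, ← blockStart_succ,
      Nat.sub_add_cancel ht, blockStart_zero, Nat.cast_zero]
    exact Int.modEq_zero_iff_dvd.mpr dvd_rfl
  · rw [show (t + d - 1) % d = t - 1 by
      rw [show t + d - 1 = t - 1 + d by omega, Nat.add_mod_right, Nat.mod_eq_of_lt (by omega)]]
    rw [← Nat.cast_add, ← blockStart_succ, Nat.sub_add_cancel htpos]

theorem le_cycEntryInt_blockStart_sub (hk : ∀ t < d, k t = 1 ∨ k t = ℓ)
    (hdown : ∀ t < d, k t = 1 → ρ t ≤ ρ ((t + d - 1) % d)) {j : ℕ} (hj : 0 < j) (hjℓ : j < ℓ)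
    {t : ℕ} (ht : t < d) (hmono : ρ t ≤ ρ ((t + d - 1) % d)) :
    ρ t ≤ cycEntryInt (blockCycle d ρ k) (blockStart k t - j) := by
  induction j generalizing t with
  | zero => omega
  | succ j ih =>
    set t' := (t + d - 1) % d
    have ht' : t' < d := Nat.mod_lt _ (by omega)
    have hshift : (blockStart k t - (j + 1 : ℕ) : ℤ) ≡ blockStart k t' + k t' - (j + 1 : ℕ)
        [ZMOD (blockCycle d ρ k).length] := by
      rw [length_blockCycle]
      exact (blockStart_prev_add_modEq k ht).symm.sub_right _
    rw [cycEntryInt_congr _ hshift]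
    by_cases hjk : j + 1 ≤ k t'
    · rw [show (blockStart k t' + k t' - (j + 1 : ℕ) : ℤ) = (blockStart k t' + (k t' - (j + 1)) : ℕ)
        by push_cast [hjk]; ring, cycEntryInt_blockCycle ρ k ht' (by omega)]
      exact hmono
    · have hk1 : k t' = 1 := (hk t' ht').resolve_right (by omega)
      rw [hk1, show (blockStart k t' + (1 : ℕ) - (j + 1 : ℕ) : ℤ) = blockStart k t' - j by
        push_cast; ring]
      exact hmono.trans (ih (by omega) (by omega) ht' (hdown t' ht' hk1))

theorem isResetPoint_blockCycle (hℓ : 0 < ℓ) (hk : ∀ t < d, k t = 1 ∨ k t = ℓ)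
    (hdown : ∀ t < d, k t = 1 → ρ t ≤ ρ ((t + d - 1) % d)) {t i : ℕ} (ht : t < d) (hi : i < k t)
    (hmono : i + 1 < ℓ → ρ t ≤ ρ ((t + d - 1) % d)) :
    IsResetPoint ℓ hℓ (blockCycle d ρ k) (blockStart k t + i) := by
  rw [isResetPoint_iff]
  intro j hj
  rw [← cycEntryInt_natCast, cycEntryInt_blockCycle ρ k ht hi]
  by_cases hji : j ≤ i
  · rw [show ((blockStart k t + i : ℕ) : ℤ) - j = (blockStart k t + (i - j) : ℕ) by
      push_cast [hji]; ring, cycEntryInt_blockCycle ρ k ht (by omega)]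
  · rw [show ((blockStart k t + i : ℕ) : ℤ) - j = blockStart k t - (j - i : ℕ) by
      push_cast [(by omega : i ≤ j)]; ring]
    exact le_cycEntryInt_blockStart_sub ρ k hk hdown (by omega) (by omega) ht (hmono (by omega))

end Blocks

theorem stmt9_general (ℓ : ℕ) (hℓ : 0 < ℓ)
    (d : ℕ) (ρ : ℕ → ℝ) (k : ℕ → ℕ)
    (hk : ∀ t < d, k t = 1 ∨ k t = ℓ)
    (hdown : ∀ t < d, k t = 1 → ρ t ≤ ρ ((t + d - 1) % d)) :
    ∀ t < d,
      IsResetPoint ℓ hℓ ((List.range d).flatMap fun s => List.replicate (k s) (ρ s))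
        ((∑ s ∈ Finset.range (t + 1), k s) - 1) ∧
      (k t = ℓ → ρ t ≤ ρ ((t + d - 1) % d) →
        ∀ i < ℓ,
          IsResetPoint ℓ hℓ ((List.range d).flatMap fun s => List.replicate (k s) (ρ s))
            ((∑ s ∈ Finset.range t, k s) + i)) := by
  intro t ht
  refine ⟨?_, fun hkℓ hmono i hi =>
    isResetPoint_blockCycle ρ k hℓ hk hdown ht (by omega) fun _ => hmono⟩
  have hkt : k t = 1 ∨ k t = ℓ := hk t ht
  have hlast : blockStart k (t + 1) - 1 = blockStart k t + (k t - 1) := by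
    rw [blockStart_succ]
    omega
  show IsResetPoint ℓ hℓ (blockCycle d ρ k) (blockStart k (t + 1) - 1)
  rw [hlast]
  exact isResetPoint_blockCycle ρ k hℓ hk hdown ht (by omega) fun hshort =>
    hdown t ht (by omega)

/-- in a cycle built by concatenating, for `t = 0, …, d−1`, `k t`
copies of `ρ t` with `k t ∈ {1, ℓ}` and `k t = 1 → ρ t ≤ ρ ((t−1) mod d)`, the
last position of each block is a reset point; moreover if `k t = ℓ` and
`ρ t ≤ ρ ((t−1) mod d)` then all `ℓ` positions of the block are reset points. -/
theorem stmt9 (P : Finset ℝ) (hP : P.Nonempty) (ℓ : ℕ) (hℓ : 0 < ℓ)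
    (d : ℕ) (hd : 0 < d) (ρ : ℕ → ℝ) (k : ℕ → ℕ)
    (hρP : ∀ t < d, ρ t ∈ P)
    (hk : ∀ t < d, k t = 1 ∨ k t = ℓ)
    (hdown : ∀ t < d, k t = 1 → ρ t ≤ ρ ((t + d - 1) % d)) :
    ∀ t < d,
      IsResetPoint ℓ hℓ ((List.range d).flatMap fun s => List.replicate (k s) (ρ s))
        ((∑ s ∈ Finset.range (t + 1), k s) - 1) ∧
      (k t = ℓ → ρ t ≤ ρ ((t + d - 1) % d) →
        ∀ i < ℓ,
          IsResetPoint ℓ hℓ ((List.range d).flatMap fun s => List.replicate (k s) (ρ s))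
            ((∑ s ∈ Finset.range t, k s) + i)) :=
  stmt9_general ℓ hℓ d ρ k hk hdown
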